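/- Let U be the 3×3 real unitary matrix R_x(π/4) with rows (1,0,0), (0, 1/√2, −1/√2), (0, 1/√2, 1/√2). Then: (a) for every diagonal (incoherent) 3×3 density matrix ρ, the l1-coherence gain satisfies C_{l1}(UρU†) − C_{l1}(ρ) ≤ 1; (b) for the pure state ψ = c₁e₁ + c₃e₃ with c₁ = 3/10 and c₃ = √91/10 (so ρ_ψ = |ψ⟩⟨ψ| is a density matrix with C_{l1}(ρ_ψ) > 0), the gain equals C_{l1}(Uρ_ψU†) − C_{l1}(ρ_ψ) = (2√2 − 2)c₁c₃ + c₃², and this value is strictly greater than 1. Hence the coherence power of U is not attained on incoherent states. -/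

import Mathlib

open Matrix
open scoped ComplexOrder

/-- The `l1`-coherence of a matrix: the sum of the absolute values of its
off-diagonal entries. -/
noncomputable def l1Coherence {n : ℕ} (A : Matrix (Fin n) (Fin n) ℂ) : ℝ :=
  ∑ i, ∑ j, if i ≠ j then ‖A i j‖ else 0

/-!
A unitary `U` carries an incoherent state `diag d` to `∑ₖ dₖ uₖ uₖᴴ`, where `uₖ` are the columns
of `U`. The `l1`-coherence is subadditive and absolutely homogeneous, and `∑ₖ |dₖ| = tr ρ = 1`, so
the coherence created is at most the largest coherence `∑_{i ≠ j} |uᵢₖ| |uⱼₖ|` of a column; for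
`R_x(θ)` this is `2 |cos θ sin θ| ≤ 1`. A coherent pure state `ψ`, on the other hand, is mapped to
the pure state of `Uψ = (c₁, -c₃/√2, c₃/√2)`, whose coherence `2 (√2 c₁ c₃ + c₃² / 2)` exceeds that
of `ψ` by more than `1`.
-/

section

variable {n : ℕ}

noncomputable def pureState (ψ : Fin n → ℂ) : Matrix (Fin n) (Fin n) ℂ :=
  vecMulVec ψ (star ψ)

lemma l1Coherence_zero : l1Coherence (0 : Matrix (Fin n) (Fin n) ℂ) = 0 := by
  simp [l1Coherence]

lemma l1Coherence_add_le (A B : Matrix (Fin n) (Fin n) ℂ) :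
    l1Coherence (A + B) ≤ l1Coherence A + l1Coherence B := by
  simp only [l1Coherence, ← Finset.sum_add_distrib]
  gcongr with i _ j _
  split_ifs
  · exact norm_add_le _ _
  · simp

lemma l1Coherence_smul (c : ℂ) (A : Matrix (Fin n) (Fin n) ℂ) :
    l1Coherence (c • A) = ‖c‖ * l1Coherence A := by
  simp only [l1Coherence, Finset.mul_sum, Matrix.smul_apply, smul_eq_mul, norm_mul, mul_ite,
    mul_zero]

lemma l1Coherence_sum_le {ι : Type*} (s : Finset ι) (A : ι → Matrix (Fin n) (Fin n) ℂ) :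
    l1Coherence (∑ k ∈ s, A k) ≤ ∑ k ∈ s, l1Coherence (A k) :=
  Finset.le_sum_of_subadditive _ l1Coherence_zero.le l1Coherence_add_le s A

lemma l1Coherence_diagonal (d : Fin n → ℂ) : l1Coherence (diagonal d) = 0 := by
  simp +contextual [l1Coherence]

lemma l1Coherence_pureState (v : Fin n → ℂ) :
    l1Coherence (pureState v) = ∑ i, ∑ j, if i ≠ j then ‖v i‖ * ‖v j‖ else 0 := by
  simp [l1Coherence, pureState, vecMulVec_apply]

lemma mul_diagonal_mul_conjTranspose (U : Matrix (Fin n) (Fin n) ℂ) (d : Fin n → ℂ) :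
    U * diagonal d * Uᴴ = ∑ k, d k • pureState fun i => U i k := by
  ext i j
  rw [mul_apply]
  simp only [mul_diagonal, Matrix.sum_apply, Matrix.smul_apply, pureState, vecMulVec_apply,
    conjTranspose_apply, Pi.star_apply, smul_eq_mul]
  exact Finset.sum_congr rfl fun k _ => by ring

lemma mul_pureState_mul_conjTranspose (U : Matrix (Fin n) (Fin n) ℂ) (v : Fin n → ℂ) :
    U * pureState v * Uᴴ = pureState (U *ᵥ v) := by
  rw [pureState, pureState, mul_vecMulVec, vecMulVec_mul, star_mulVec]

lemma l1Coherence_mul_diagonal_mul_conjTranspose_le (U : Matrix (Fin n) (Fin n) ℂ)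
    (d : Fin n → ℂ) {M : ℝ}
    (hM : ∀ k, l1Coherence (pureState fun i => U i k) ≤ M) :
    l1Coherence (U * diagonal d * Uᴴ) ≤ (∑ k, ‖d k‖) * M := by
  rw [mul_diagonal_mul_conjTranspose, Finset.sum_mul]
  refine (l1Coherence_sum_le _ _).trans (Finset.sum_le_sum fun k _ => ?_)
  rw [l1Coherence_smul]
  exact mul_le_mul_of_nonneg_left (hM k) (norm_nonneg _)

lemma Matrix.PosSemidef.ofReal_sum_norm_diag {A : Matrix (Fin n) (Fin n) ℂ} (hA : A.PosSemidef) :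
    ((∑ i, ‖A i i‖ : ℝ) : ℂ) = A.trace := by
  push_cast
  exact Finset.sum_congr rfl fun i _ => Complex.norm_of_nonneg' (hA.diag_nonneg)

lemma l1Coherence_gain_le_of_isDiag (U : Matrix (Fin n) (Fin n) ℂ) {M : ℝ}
    (hM : ∀ k, l1Coherence (pureState fun i => U i k) ≤ M)
    {ρ : Matrix (Fin n) (Fin n) ℂ} (hρ : ρ.PosSemidef) (htr : ρ.trace = 1) (hdiag : ρ.IsDiag) :
    l1Coherence (U * ρ * Uᴴ) - l1Coherence ρ ≤ M := by
  have hnorm : ∑ i, ‖ρ i i‖ = 1 := by exact_mod_cast hρ.ofReal_sum_norm_diag.trans htr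
  rw [← hdiag.diagonal_diag, l1Coherence_diagonal, sub_zero]
  simpa [hnorm] using l1Coherence_mul_diagonal_mul_conjTranspose_le U ρ.diag hM

end

lemma l1Coherence_pureState_fin_three (v : Fin 3 → ℂ) :
    l1Coherence (pureState v) = 2 * (‖v 0‖ * ‖v 1‖ + ‖v 0‖ * ‖v 2‖ + ‖v 1‖ * ‖v 2‖) := by
  simp [l1Coherence_pureState, Fin.sum_univ_three]
  ring

/-- The rotation `R_x(θ)` about the first axis, with `a = cos θ` and `b = sin θ`. -/
noncomputable def rotX (a b : ℝ) : Matrix (Fin 3) (Fin 3) ℂ :=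
  !![1, 0, 0; 0, (a : ℂ), -(b : ℂ); 0, (b : ℂ), (a : ℂ)]

lemma l1Coherence_rotX_column_le (a b : ℝ) (k : Fin 3) :
    l1Coherence (pureState fun i => rotX a b i k) ≤ a ^ 2 + b ^ 2 := by
  have h := two_mul_le_add_sq |a| |b|
  rw [sq_abs, sq_abs] at h
  rw [l1Coherence_pureState_fin_three]
  fin_cases k <;> simp [rotX] <;> nlinarith [sq_nonneg a]

lemma rotX_mulVec (a b c₁ c₃ : ℝ) :
    rotX a b *ᵥ ![(c₁ : ℂ), 0, (c₃ : ℂ)] = ![(c₁ : ℂ), -(b * c₃ : ℝ), (a * c₃ : ℝ)] := by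
  ext i
  fin_cases i <;> simp [rotX, mulVec, dotProduct, Fin.sum_univ_three]

lemma l1Coherence_rotX_gain (a b c₁ c₃ : ℝ) :
    l1Coherence (rotX a b * pureState ![(c₁ : ℂ), 0, (c₃ : ℂ)] * (rotX a b)ᴴ)
      - l1Coherence (pureState ![(c₁ : ℂ), 0, (c₃ : ℂ)]) =
      2 * |c₁ * c₃| * (|a| + |b| - 1) + 2 * |a * b| * c₃ ^ 2 := by
  rw [mul_pureState_mul_conjTranspose, rotX_mulVec, l1Coherence_pureState_fin_three,
    l1Coherence_pureState_fin_three]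
  simp only [cons_val, norm_neg, Complex.norm_real, Real.norm_eq_abs, norm_zero, abs_mul]
  rw [← sq_abs c₃]
  ring

/-- For the rotation `R_x(π/4)`, the `l1`-coherence gain on every incoherent
(diagonal) density matrix is at most `1`, while the coherent pure state
`ψ = c₁ e₁ + c₃ e₃` with `c₁ = 3/10`, `c₃ = √91/10` achieves the strictly
larger gain `(2√2 − 2)c₁c₃ + c₃² > 1`. Hence the coherence power of
`R_x(π/4)` is not attained on incoherent states. -/
theorem rotation_pi_div_four_coherent_gain
    (U : Matrix (Fin 3) (Fin 3) ℂ)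
    (hU : U = !![1, 0, 0;
                 0, ((Real.sqrt 2 : ℝ) : ℂ)⁻¹, -((Real.sqrt 2 : ℝ) : ℂ)⁻¹;
                 0, ((Real.sqrt 2 : ℝ) : ℂ)⁻¹, ((Real.sqrt 2 : ℝ) : ℂ)⁻¹])
    (c₁ c₃ : ℝ) (hc₁ : c₁ = 3 / 10) (hc₃ : c₃ = Real.sqrt 91 / 10)
    (ψ : Fin 3 → ℂ) (hψ : ψ = ![(c₁ : ℂ), 0, (c₃ : ℂ)])
    (ρψ : Matrix (Fin 3) (Fin 3) ℂ)
    (hρψ : ρψ = Matrix.of fun i j => ψ i * starRingEnd ℂ (ψ j)) :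
    (ρψ.PosSemidef ∧ ρψ.trace = 1 ∧ 0 < l1Coherence ρψ) ∧
    (∀ ρ : Matrix (Fin 3) (Fin 3) ℂ, ρ.PosSemidef → ρ.trace = 1 →
      (∀ i j : Fin 3, i ≠ j → ρ i j = 0) →
      l1Coherence (U * ρ * Uᴴ) - l1Coherence ρ ≤ 1) ∧
    l1Coherence (U * ρψ * Uᴴ) - l1Coherence ρψ =
      (2 * Real.sqrt 2 - 2) * c₁ * c₃ + c₃ ^ 2 ∧
    1 < (2 * Real.sqrt 2 - 2) * c₁ * c₃ + c₃ ^ 2 := by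
  set s := (Real.sqrt 2)⁻¹ with hs
  have hUrot : U = rotX s s := by rw [hU, rotX, Complex.ofReal_inv]
  have hρψ_pure : ρψ = pureState ψ := hρψ
  subst hUrot hρψ_pure hψ hc₁ hc₃
  have hs_sq : s ^ 2 = 1 / 2 := by rw [inv_pow, Real.sq_sqrt zero_le_two, one_div]
  have hs_add : s + s = Real.sqrt 2 := by
    rw [hs]
    field_simp
    rw [Real.sq_sqrt zero_le_two]
    norm_num
  have h91 : Real.sqrt 91 ^ 2 = 91 := Real.sq_sqrt (by norm_num)
  refine ⟨⟨posSemidef_vecMulVec_self_star _, ?_, ?_⟩, fun ρ hρ htr hdiag => ?_, ?_, ?_⟩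
  · rw [pureState, trace_vecMulVec]
    simp only [dotProduct, Fin.sum_univ_three, cons_val, Pi.star_apply, Complex.star_def,
      Complex.conj_ofReal, map_zero, zero_mul, add_zero]
    exact_mod_cast
      (by nlinarith : 3 / 10 * (3 / 10) + Real.sqrt 91 / 10 * (Real.sqrt 91 / 10) = (1 : ℝ))
  · rw [l1Coherence_pureState_fin_three]
    simp
  · calc l1Coherence (rotX s s * ρ * (rotX s s)ᴴ) - l1Coherence ρ ≤ s ^ 2 + s ^ 2 :=
          l1Coherence_gain_le_of_isDiag _ (l1Coherence_rotX_column_le s s) hρ htr hdiag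
      _ = 1 := by rw [hs_sq]; norm_num
  · rw [l1Coherence_rotX_gain, abs_of_nonneg (by positivity : (0:ℝ) ≤ s), abs_mul_self,
      abs_of_nonneg (by positivity : (0:ℝ) ≤ 3 / 10 * (Real.sqrt 91 / 10))]
    linear_combination (3 / 5 * (Real.sqrt 91 / 10)) * hs_add + 2 * (Real.sqrt 91 / 10) ^ 2 * hs_sq
  · have h2 : (1.4 : ℝ) < Real.sqrt 2 := by
      rw [Real.lt_sqrt (by norm_num)]; norm_num
    have h9 : (9 : ℝ) < Real.sqrt 91 := by
      rw [Real.lt_sqrt (by norm_num)]; norm_num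
    nlinarith
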